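/- Let k and w be positive integers and let A be the adjacency matrix of a regular tournament of order 2k+1 with valency k. Let B₂ = [[A, Aᵀ], [A, Aᵀ]] and let B = J_w ⊗ B₂ be the Kronecker product of the w×w all-ones matrix with B₂ (equivalently, the block matrix of order (4k+2)w in which every block row consists of w alternating copies of A and Aᵀ). Then B is the adjacency matrix of a directed strongly regular graph with parameters ((4k+2)w, 2kw, kw, (k−1)w, kw). -/

import Mathlib

open Matrix Kronecker

/-- The all-ones square matrix over `ℤ` indexed by `α`. -/
def allOnes (α : Type*) : Matrix α α ℤ := Matrix.of fun _ _ => 1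

/-- `B` is the adjacency matrix of a directed strongly regular graph
with parameters `(n, k, t, l, m)`. -/
def IsAdjDSRG {α : Type*} [Fintype α] [DecidableEq α]
    (B : Matrix α α ℤ) (n k t l m : ℤ) : Prop :=
  (Fintype.card α : ℤ) = n ∧
  (∀ i j, B i j = 0 ∨ B i j = 1) ∧
  (∀ i, B i i = 0) ∧
  B * B = t • (1 : Matrix α α ℤ) + l • B + m • (allOnes α - 1 - B) ∧
  B * allOnes α = k • allOnes α ∧
  allOnes α * B = k • allOnes α

/-- `A` is the adjacency matrix of a regular tournament of order `n` with valency `k`. -/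
def IsRegularTournament {n : ℕ} (k : ℕ) (A : Matrix (Fin n) (Fin n) ℤ) : Prop :=
  (∀ i j, A i j = 0 ∨ A i j = 1) ∧
  (∀ i, A i i = 0) ∧
  A + Aᵀ = allOnes (Fin n) - 1 ∧
  A * allOnes (Fin n) = (k : ℤ) • allOnes (Fin n) ∧
  allOnes (Fin n) * A = (k : ℤ) • allOnes (Fin n)

/-- The block matrix `M(X) = [[X, Xᵀ + I], [X + I, Xᵀ]]`. -/
def MBlock {α : Type*} [DecidableEq α] (X : Matrix α α ℤ) :
    Matrix (α ⊕ α) (α ⊕ α) ℤ :=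
  Matrix.fromBlocks X (Xᵀ + 1) (X + 1) Xᵀ

/-!
Both block rows of `B₂ = [[A, Aᵀ], [A, Aᵀ]]` are `[A, Aᵀ]`, so `A + Aᵀ = J - I` gives
`B₂² = kJ - B₂`: `B₂` is a DSRG `(4k+2, 2k, k, k-1, k)`. For a DSRG with `t = μ` the defining
relation reads `B² = μJ + (λ - μ)B`, with no identity term, and so it survives the blow-up
`J_w ⊗ B` of every vertex into `w` twins: `(J_w ⊗ B)² = wJ_w ⊗ B²` multiplies every parameter by `w`.
-/

lemma allOnes_transpose (α : Type*) : (allOnes α)ᵀ = allOnes α := rfl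

lemma allOnes_mul_allOnes (α : Type*) [Fintype α] :
    allOnes α * allOnes α = (Fintype.card α : ℤ) • allOnes α := by
  ext i j
  simp [allOnes, Matrix.mul_apply]

lemma allOnes_sum (α : Type*) :
    allOnes (α ⊕ α) = fromBlocks (allOnes α) (allOnes α) (allOnes α) (allOnes α) := by
  ext (i | i) (j | j) <;> rfl

lemma allOnes_prod (α β : Type*) : allOnes (α × β) = allOnes α ⊗ₖ allOnes β := by
  ext i j
  simp [allOnes]

lemma allOnes_kronecker_apply {ι α : Type*} (B : Matrix α α ℤ) (i j : ι × α) :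
    (allOnes ι ⊗ₖ B) i j = B i.2 j.2 := by
  simp [allOnes]

theorem IsAdjDSRG.allOnes_kronecker {ι α : Type*} [Fintype ι] [DecidableEq ι] [Fintype α]
    [DecidableEq α] {B : Matrix α α ℤ} {n k t l : ℤ} (hB : IsAdjDSRG B n k t l t) :
    IsAdjDSRG (allOnes ι ⊗ₖ B) (n * Fintype.card ι) (k * Fintype.card ι)
      (t * Fintype.card ι) (l * Fintype.card ι) (t * Fintype.card ι) := by
  obtain ⟨hcard, h01, hdiag, hsq, hBJ, hJB⟩ := hB
  have hsq' : B * B = t • allOnes α + (l - t) • B := by rw [hsq]; module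
  refine ⟨?_, fun i j => ?_, fun i => ?_, ?_, ?_, ?_⟩
  · rw [Fintype.card_prod, ← hcard]; push_cast; ring
  · rw [allOnes_kronecker_apply]; exact h01 i.2 j.2
  · rw [allOnes_kronecker_apply]; exact hdiag i.2
  · rw [← mul_kronecker_mul, allOnes_mul_allOnes, hsq', kronecker_add, smul_kronecker,
      smul_kronecker, kronecker_smul, kronecker_smul, ← allOnes_prod]
    module
  · rw [allOnes_prod, ← mul_kronecker_mul, allOnes_mul_allOnes, hBJ, smul_kronecker,
      kronecker_smul, ← allOnes_prod]
    module
  · rw [allOnes_prod, ← mul_kronecker_mul, allOnes_mul_allOnes, hJB, smul_kronecker,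
      kronecker_smul, ← allOnes_prod]
    module

namespace IsRegularTournament

variable {n k : ℕ} {A : Matrix (Fin n) (Fin n) ℤ}

lemma transpose_mul_allOnes (hA : IsRegularTournament k A) :
    Aᵀ * allOnes (Fin n) = (k : ℤ) • allOnes (Fin n) := by
  have h := congrArg transpose hA.2.2.2.2
  rwa [transpose_mul, transpose_smul, allOnes_transpose] at h

lemma allOnes_mul_transpose (hA : IsRegularTournament k A) :
    allOnes (Fin n) * Aᵀ = (k : ℤ) • allOnes (Fin n) := by
  have h := congrArg transpose hA.2.2.2.1
  rwa [transpose_mul, transpose_smul, allOnes_transpose] at h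

lemma fromBlocks_mul_self (hA : IsRegularTournament k A) :
    fromBlocks A Aᵀ A Aᵀ * fromBlocks A Aᵀ A Aᵀ =
      (k : ℤ) • allOnes (Fin n ⊕ Fin n) - fromBlocks A Aᵀ A Aᵀ := by
  have hsum (X : Matrix (Fin n) (Fin n) ℤ) : A * X + Aᵀ * X = allOnes (Fin n) * X - X := by
    rw [← add_mul, hA.2.2.1, sub_mul, one_mul]
  rw [fromBlocks_multiply, hsum, hsum, hA.2.2.2.2, hA.allOnes_mul_transpose, allOnes_sum,
    fromBlocks_smul]
  ext (i | i) (j | j) <;> rfl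

lemma fromBlocks_mul_allOnes (hA : IsRegularTournament k A) :
    fromBlocks A Aᵀ A Aᵀ * allOnes (Fin n ⊕ Fin n) = (2 * k : ℤ) • allOnes (Fin n ⊕ Fin n) := by
  rw [allOnes_sum, fromBlocks_multiply, hA.2.2.2.1, hA.transpose_mul_allOnes, fromBlocks_smul,
    ← two_smul ℤ, smul_smul]

lemma allOnes_mul_fromBlocks (hA : IsRegularTournament k A) :
    allOnes (Fin n ⊕ Fin n) * fromBlocks A Aᵀ A Aᵀ = (2 * k : ℤ) • allOnes (Fin n ⊕ Fin n) := by
  rw [allOnes_sum, fromBlocks_multiply, hA.2.2.2.2, hA.allOnes_mul_transpose, fromBlocks_smul,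
    ← two_smul ℤ, smul_smul]

theorem isAdjDSRG_fromBlocks (hA : IsRegularTournament k A) :
    IsAdjDSRG (fromBlocks A Aᵀ A Aᵀ) (2 * n) (2 * k) k (k - 1) k := by
  refine ⟨?_, ?_, ?_, ?_, hA.fromBlocks_mul_allOnes, hA.allOnes_mul_fromBlocks⟩
  · simp only [Fintype.card_sum, Fintype.card_fin]; push_cast; ring
  · rintro (i | i) (j | j)
    exacts [hA.1 i j, hA.1 j i, hA.1 i j, hA.1 j i]
  · rintro (i | i)
    exacts [hA.2.1 i, hA.2.1 i]
  · rw [hA.fromBlocks_mul_self]; module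

end IsRegularTournament

theorem stmt5_general (k w : ℕ)
    (A : Matrix (Fin (2 * k + 1)) (Fin (2 * k + 1)) ℤ)
    (hA : IsRegularTournament k A) :
    IsAdjDSRG (allOnes (Fin w) ⊗ₖ Matrix.fromBlocks A Aᵀ A Aᵀ)
      ((4 * (k : ℤ) + 2) * w) (2 * (k : ℤ) * w) ((k : ℤ) * w)
      (((k : ℤ) - 1) * w) ((k : ℤ) * w) := by
  have h := hA.isAdjDSRG_fromBlocks.allOnes_kronecker (ι := Fin w)
  rw [Fintype.card_fin] at h
  convert h using 2
  push_cast
  ring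

/-- Lemma 4(1): `J_w ⊗ [[A, Aᵀ], [A, Aᵀ]]` built from a regular tournament of
order `2k+1` is the adjacency matrix of a DSRG `((4k+2)w, 2kw, kw, (k-1)w, kw)`. -/
theorem stmt5 (k w : ℕ) (hk : 0 < k) (hw : 0 < w)
    (A : Matrix (Fin (2 * k + 1)) (Fin (2 * k + 1)) ℤ)
    (hA : IsRegularTournament k A) :
    IsAdjDSRG (allOnes (Fin w) ⊗ₖ Matrix.fromBlocks A Aᵀ A Aᵀ)
      ((4 * (k : ℤ) + 2) * w) (2 * (k : ℤ) * w) ((k : ℤ) * w)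
      (((k : ℤ) - 1) * w) ((k : ℤ) * w) :=
  stmt5_general k w A hA
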